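/- Fix a real exponent t ≥ 1 and define the phase norm N_{(p,q,r)}(X) = (Σ_{(i,j,k)} |Ψ(X)_{(p,q,r)}(i,j,k)|^t)^{1/t}, the sum running over all coarse-grid indices. Then for every volume X, all integers g = (g₁,g₂,g₃), and every phase (p,q,r), one has N_{(p,q,r)}(T_g X) = N_{(p′,q′,r′)}(X), where p′ = (p−g₁) mod s₁, q′ = (q−g₂) mod s₂, r′ = (r−g₃) mod s₃. In particular, the multiset of phase norms of T_g X equals that of X. -/

import Mathlib

noncomputable section

open scoped BigOperators

/-- The well-defined map `ZMod n → ZMod (n*s)` induced by `a ↦ s*a + p`. -/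
def phaseEmb (n s : ℕ) (p : ℤ) (i : ZMod n) : ZMod (n * s) :=
  (s : ZMod (n * s)) * (i.val : ZMod (n * s)) + (p : ZMod (n * s))

/-- Circular translation of a volume by an integer vector `g`:
`(T_g X)(i,j,k) = X(i-g₁, j-g₂, k-g₃)`. -/
def Tvol {D H W : ℕ} (g : ℤ × ℤ × ℤ) (X : ZMod D × ZMod H × ZMod W → ℝ) :
    ZMod D × ZMod H × ZMod W → ℝ :=
  fun v => X (v.1 - (g.1 : ZMod D), v.2.1 - (g.2.1 : ZMod H), v.2.2 - (g.2.2 : ZMod W))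

/-- Polyphase component `Ψ(X)_{(p,q,r)}(i,j,k) = X(s₁·i+p, s₂·j+q, s₃·k+r)`. -/
def Psi (s₁ s₂ s₃ n₁ n₂ n₃ : ℕ) (p q r : ℤ)
    (X : ZMod (n₁ * s₁) × ZMod (n₂ * s₂) × ZMod (n₃ * s₃) → ℝ) :
    ZMod n₁ × ZMod n₂ × ZMod n₃ → ℝ :=
  fun v => X (phaseEmb n₁ s₁ p v.1, phaseEmb n₂ s₂ q v.2.1, phaseEmb n₃ s₃ r v.2.2)

/-- Phase norm `N_{(p,q,r)}(X) = (Σ_{(i,j,k)} |Ψ(X)_{(p,q,r)}(i,j,k)|^t)^{1/t}`. -/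
noncomputable def phaseNorm (s₁ s₂ s₃ n₁ n₂ n₃ : ℕ) [NeZero n₁] [NeZero n₂] [NeZero n₃]
    (t : ℝ) (p q r : ℤ)
    (X : ZMod (n₁ * s₁) × ZMod (n₂ * s₂) × ZMod (n₃ * s₃) → ℝ) : ℝ :=
  (∑ v : ZMod n₁ × ZMod n₂ × ZMod n₃,
      |Psi s₁ s₂ s₃ n₁ n₂ n₃ p q r X v| ^ t) ^ (1 / t)

/-!
Translating by `g` turns the phase-`p` polyphase component into the one at the unreduced phase
`p - g`. Writing `p - g = (p - g) % s + s * ((p - g) / s)`, the second summand only translates the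
coarse grid by `(p - g) / s`, which permutes the terms of the `ℓ^t` sum. Hence the phase norms of
`T_g X` are those of `X` permuted by `p ↦ (p - g) % s`.
-/

lemma phaseEmb_add_intCast (n s : ℕ) [NeZero n] (p m : ℤ) (i : ZMod n) :
    phaseEmb n s p (i + (m : ZMod n)) = phaseEmb n s (p + s * m) i := by
  have hval : (((i + m).val : ℕ) : ℤ) ≡ i.val + m [ZMOD n] := by
    rw [← ZMod.intCast_eq_intCast_iff]
    push_cast
    simp only [ZMod.natCast_val, ZMod.cast_id', id_eq]
  have hscaled : (s * (i + m).val : ℤ) ≡ s * (i.val + m) [ZMOD (n * s : ℕ)] := by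
    rw [Nat.cast_mul, mul_comm (n : ℤ)]
    exact hval.mul_left'
  have := (ZMod.intCast_eq_intCast_iff _ _ _).mpr hscaled
  push_cast at this
  simp only [phaseEmb, this]
  push_cast
  ring

lemma phaseEmb_sub_intCast (n s : ℕ) (p g : ℤ) (i : ZMod n) :
    phaseEmb n s p i - (g : ZMod (n * s)) = phaseEmb n s (p - g) i := by
  simp only [phaseEmb]
  push_cast
  ring

lemma exists_perm_fin_sub_emod : ∀ (s : ℕ) (g : ℤ),
    ∃ σ : Equiv.Perm (Fin s), ∀ a, ((σ a : ℕ) : ℤ) = ((a : ℤ) - g) % s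
  | 0, _ => ⟨1, fun a => a.elim0⟩
  -- `Fin (k + 1)` and `ZMod (k + 1)` are the same type, so subtraction in `ZMod` is a permutation.
  | k + 1, g => ⟨Equiv.subRight (g : ZMod (k + 1)), fun (a : ZMod (k + 1)) => by
      change (((a - g).val : ℕ) : ℤ) = ((a.val : ℤ) - g) % (k + 1 : ℕ)
      rw [← ZMod.val_intCast]
      push_cast
      rw [ZMod.natCast_zmod_val]⟩

section Phases

variable {s₁ s₂ s₃ n₁ n₂ n₃ : ℕ} (X : ZMod (n₁ * s₁) × ZMod (n₂ * s₂) × ZMod (n₃ * s₃) → ℝ)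

lemma Psi_Tvol (p q r g₁ g₂ g₃ : ℤ) :
    Psi s₁ s₂ s₃ n₁ n₂ n₃ p q r (Tvol (g₁, g₂, g₃) X)
      = Psi s₁ s₂ s₃ n₁ n₂ n₃ (p - g₁) (q - g₂) (r - g₃) X := by
  ext v
  simp only [Psi, Tvol, phaseEmb_sub_intCast]

lemma Psi_add_mul [NeZero n₁] [NeZero n₂] [NeZero n₃] (p q r a b c : ℤ)
    (v : ZMod n₁ × ZMod n₂ × ZMod n₃) :
    Psi s₁ s₂ s₃ n₁ n₂ n₃ (p + s₁ * a) (q + s₂ * b) (r + s₃ * c) X v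
      = Psi s₁ s₂ s₃ n₁ n₂ n₃ p q r X (v + ((a : ZMod n₁), (b : ZMod n₂), (c : ZMod n₃))) := by
  simp only [Psi, Prod.fst_add, Prod.snd_add, phaseEmb_add_intCast]

variable [NeZero n₁] [NeZero n₂] [NeZero n₃] (t : ℝ)

lemma phaseNorm_Tvol (p q r g₁ g₂ g₃ : ℤ) :
    phaseNorm s₁ s₂ s₃ n₁ n₂ n₃ t p q r (Tvol (g₁, g₂, g₃) X)
      = phaseNorm s₁ s₂ s₃ n₁ n₂ n₃ t (p - g₁) (q - g₂) (r - g₃) X := by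
  rw [phaseNorm, Psi_Tvol, phaseNorm]

lemma phaseNorm_add_mul (p q r a b c : ℤ) :
    phaseNorm s₁ s₂ s₃ n₁ n₂ n₃ t (p + s₁ * a) (q + s₂ * b) (r + s₃ * c) X
      = phaseNorm s₁ s₂ s₃ n₁ n₂ n₃ t p q r X := by
  simp only [phaseNorm, Psi_add_mul]
  congr 1
  exact Fintype.sum_equiv (Equiv.addRight _) _ _ fun _ => rfl

lemma phaseNorm_emod (p q r : ℤ) :
    phaseNorm s₁ s₂ s₃ n₁ n₂ n₃ t (p % s₁) (q % s₂) (r % s₃) X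
      = phaseNorm s₁ s₂ s₃ n₁ n₂ n₃ t p q r X := by
  have h := phaseNorm_add_mul X t (p % s₁) (q % s₂) (r % s₃) (p / s₁) (q / s₂) (r / s₃)
  rw [Int.emod_add_mul_ediv, Int.emod_add_mul_ediv, Int.emod_add_mul_ediv] at h
  exact h.symm

end Phases

theorem phase_norm_translation_general
    (s₁ s₂ s₃ n₁ n₂ n₃ : ℕ) [NeZero n₁] [NeZero n₂] [NeZero n₃]
    (t : ℝ)
    (X : ZMod (n₁ * s₁) × ZMod (n₂ * s₂) × ZMod (n₃ * s₃) → ℝ)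
    (g₁ g₂ g₃ p q r : ℤ) :
    phaseNorm s₁ s₂ s₃ n₁ n₂ n₃ t p q r (Tvol (g₁, g₂, g₃) X)
      = phaseNorm s₁ s₂ s₃ n₁ n₂ n₃ t
          ((p - g₁) % (s₁ : ℤ)) ((q - g₂) % (s₂ : ℤ)) ((r - g₃) % (s₃ : ℤ)) X
    ∧ Multiset.map
        (fun k : Fin s₁ × Fin s₂ × Fin s₃ =>
          phaseNorm s₁ s₂ s₃ n₁ n₂ n₃ t (k.1 : ℤ) (k.2.1 : ℤ) (k.2.2 : ℤ)
            (Tvol (g₁, g₂, g₃) X))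
        Finset.univ.val
      = Multiset.map
        (fun k : Fin s₁ × Fin s₂ × Fin s₃ =>
          phaseNorm s₁ s₂ s₃ n₁ n₂ n₃ t (k.1 : ℤ) (k.2.1 : ℤ) (k.2.2 : ℤ) X)
        Finset.univ.val := by
  have hshift (p q r : ℤ) : phaseNorm s₁ s₂ s₃ n₁ n₂ n₃ t p q r (Tvol (g₁, g₂, g₃) X)
      = phaseNorm s₁ s₂ s₃ n₁ n₂ n₃ t
          ((p - g₁) % (s₁ : ℤ)) ((q - g₂) % (s₂ : ℤ)) ((r - g₃) % (s₃ : ℤ)) X := by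
    rw [phaseNorm_Tvol, phaseNorm_emod]
  refine ⟨hshift p q r, ?_⟩
  obtain ⟨σ₁, hσ₁⟩ := exists_perm_fin_sub_emod s₁ g₁
  obtain ⟨σ₂, hσ₂⟩ := exists_perm_fin_sub_emod s₂ g₂
  obtain ⟨σ₃, hσ₃⟩ := exists_perm_fin_sub_emod s₃ g₃
  conv_rhs => rw [← Multiset.map_univ_val_equiv (σ₁.prodCongr (σ₂.prodCongr σ₃)),
    Multiset.map_map]
  refine Multiset.map_congr rfl fun k _ => ?_
  simp only [hshift, Function.comp_apply, Equiv.prodCongr_apply, Prod.map, hσ₁, hσ₂, hσ₃]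

/-- For every volume `X`, translation `g` and phase `(p,q,r)`,
`N_{(p,q,r)}(T_g X) = N_{(p',q',r')}(X)` with `p' = (p-g₁) mod s₁`, etc.;
in particular, the multiset of phase norms of `T_g X` equals that of `X`. -/
theorem phase_norm_translation
    (s₁ s₂ s₃ n₁ n₂ n₃ : ℕ) [NeZero n₁] [NeZero n₂] [NeZero n₃]
    (hs₁ : 0 < s₁) (hs₂ : 0 < s₂) (hs₃ : 0 < s₃)
    (t : ℝ) (ht : 1 ≤ t)
    (X : ZMod (n₁ * s₁) × ZMod (n₂ * s₂) × ZMod (n₃ * s₃) → ℝ)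
    (g₁ g₂ g₃ p q r : ℤ)
    (hp0 : 0 ≤ p) (hps : p < (s₁ : ℤ))
    (hq0 : 0 ≤ q) (hqs : q < (s₂ : ℤ))
    (hr0 : 0 ≤ r) (hrs : r < (s₃ : ℤ)) :
    phaseNorm s₁ s₂ s₃ n₁ n₂ n₃ t p q r (Tvol (g₁, g₂, g₃) X)
      = phaseNorm s₁ s₂ s₃ n₁ n₂ n₃ t
          ((p - g₁) % (s₁ : ℤ)) ((q - g₂) % (s₂ : ℤ)) ((r - g₃) % (s₃ : ℤ)) X
    ∧ Multiset.map
        (fun k : Fin s₁ × Fin s₂ × Fin s₃ =>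
          phaseNorm s₁ s₂ s₃ n₁ n₂ n₃ t (k.1 : ℤ) (k.2.1 : ℤ) (k.2.2 : ℤ)
            (Tvol (g₁, g₂, g₃) X))
        Finset.univ.val
      = Multiset.map
        (fun k : Fin s₁ × Fin s₂ × Fin s₃ =>
          phaseNorm s₁ s₂ s₃ n₁ n₂ n₃ t (k.1 : ℤ) (k.2.1 : ℤ) (k.2.2 : ℤ) X)
        Finset.univ.val :=
  phase_norm_translation_general s₁ s₂ s₃ n₁ n₂ n₃ t X g₁ g₂ g₃ p q r
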